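/- Let I, L ⊆ Π. Every double coset W_L w W_I ⊆ W such that w⁻¹(Φ_L) ∩ Φ_I = ∅ contains exactly one left coset w'W_I with w'⁻¹(Φ_L⁺) ⊆ Φ⁺ \ Φ_I. Consequently, the natural projection W/W_I → W_L\W/W_I restricts to a bijection from {wW_I ∈ W/W_I | w⁻¹(Φ_L⁺) ⊆ Φ⁺ \ Φ_I} onto {W_L w W_I ∈ W_L\W/W_I | w⁻¹(Φ_L) ∩ Φ_I = ∅} (the latter condition being independent of the representative w of the double coset). -/

import Mathlib

/-!
Positivity of a Weyl group element on `Φ_L⁺` is detected on the simple roots `L`, because a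
positive root of `Φ_L` is a nonnegative combination of `L`. In a double coset `W_L w W_I` with
`w⁻¹(Φ_L) ∩ Φ_I = ∅`, pick `u ∈ W_L` for which `(u w)⁻¹` makes the fewest roots of `Φ_L⁺`
negative; if `(u w)⁻¹ δ < 0` for some `δ ∈ L`, then `s_δ u` makes fewer negative, so `(u w)⁻¹`
maps `Φ_L⁺` into `Φ⁺`, and the disjointness condition, which is invariant under `W_L × W_I`
since `W_L` preserves `Φ_L` and `W_I` preserves `Φ_I`, keeps the image outside `Φ_I`.

If both `w` and `u w v` qualify, then `u⁻¹` is positive on `L`: otherwise, as `W_I` preserves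
`Φ⁺ \ Φ_I`, `u w v` would send a simple root of `L` to a negative root. By the exchange
condition the only element of `W_L` that is positive on `L` is `1`, so `u = 1`.
-/

variable {V : Type*} [NormedAddCommGroup V] [InnerProductSpace ℝ V]

/-- `Φ` is a finite reduced crystallographic root system spanning `V`. -/
structure IsRootSystem (Φ : Set V) : Prop where
  finite : Φ.Finite
  zero_not_mem : (0 : V) ∉ Φ
  span_top : Submodule.span ℝ Φ = ⊤
  reduced : ∀ α ∈ Φ, ∀ c : ℝ, c • α ∈ Φ → c = 1 ∨ c = -1
  crystallographic : ∀ α ∈ Φ, ∀ β ∈ Φ,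
    ∃ n : ℤ, 2 * (inner ℝ β α : ℝ) / (inner ℝ α α : ℝ) = (n : ℝ)
  reflect_mem : ∀ α ∈ Φ, ∀ β ∈ Φ,
    β - (2 * (inner ℝ β α : ℝ) / (inner ℝ α α : ℝ)) • α ∈ Φ

/-- `α` is a nonnegative linear combination of elements of `Δ`. -/
def IsNonnegComb (Δ : Set V) (α : V) : Prop :=
  ∃ c : V →₀ ℝ, (c.support : Set V) ⊆ Δ ∧ (∀ v, 0 ≤ c v) ∧ α = c.sum fun v r => r • v

/-- `Δ` is a base (set of simple roots) of the root system `Φ`. -/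
structure IsBase (Φ Δ : Set V) : Prop where
  subset : Δ ⊆ Φ
  indep : LinearIndependent ℝ (Subtype.val : Δ → V)
  pos_or_neg : ∀ α ∈ Φ, IsNonnegComb Δ α ∨ IsNonnegComb Δ (-α)

/-- The set of positive roots with respect to the base `Δ`. -/
def posRoots (Φ Δ : Set V) : Set V := {α ∈ Φ | IsNonnegComb Δ α}

/-- The set of negative roots with respect to the base `Δ`. -/
def negRoots (Φ Δ : Set V) : Set V := {α ∈ Φ | IsNonnegComb Δ (-α)}

/-- `Φ_A := Φ ∩ span A`. -/
def rootsIn (Φ A : Set V) : Set V := Φ ∩ (Submodule.span ℝ A : Set V)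

/-- `Φ_A⁺`. -/
def posRootsIn (Φ Δ A : Set V) : Set V := rootsIn Φ A ∩ posRoots Φ Δ

/-- `Φ_A⁻`. -/
def negRootsIn (Φ Δ A : Set V) : Set V := rootsIn Φ A ∩ negRoots Φ Δ

/-- `Γ` is a closed subset of `Φ`. -/
def IsClosedSubset (Φ Γ : Set V) : Prop := ∀ α ∈ Γ, ∀ β ∈ Γ, α + β ∈ Φ → α + β ∈ Γ

/-- `X` and `Y` are orthogonal sets of vectors. -/
def OrthogonalSets (X Y : Set V) : Prop := ∀ α ∈ X, ∀ β ∈ Y, (inner ℝ α β : ℝ) = 0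

/-- The group generated by the reflections `s α`, `α ∈ A`. -/
def weylGroupOf (A : Set V) (s : V → V ≃ₗ[ℝ] V) : Subgroup (V ≃ₗ[ℝ] V) :=
  Subgroup.closure (s '' A)

/-- `s α` is the orthogonal reflection in the root `α`, for every `α ∈ Φ`. -/
def IsReflectionFamily (Φ : Set V) (s : V → V ≃ₗ[ℝ] V) : Prop :=
  ∀ α ∈ Φ, ∀ x : V, s α x = x - (2 * (inner ℝ x α : ℝ) / (inner ℝ α α : ℝ)) • α

theorem IsRootSystem.neg_mem {Φ : Set V} (hΦ : IsRootSystem Φ) {α : V} (hα : α ∈ Φ) : -α ∈ Φ := by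
  have hα0 : inner ℝ α α ≠ (0 : ℝ) :=
    inner_self_ne_zero.mpr (ne_of_mem_of_not_mem hα hΦ.zero_not_mem)
  have h := hΦ.reflect_mem α hα α hα
  rwa [mul_div_assoc, div_self hα0, mul_one, two_smul, sub_add_cancel_left] at h

theorem neg_mem_rootsIn {Φ A : Set V} (hΦ : IsRootSystem Φ) {α : V} (hα : α ∈ rootsIn Φ A) :
    -α ∈ rootsIn Φ A :=
  ⟨hΦ.neg_mem hα.1, Submodule.neg_mem _ hα.2⟩

namespace IsReflectionFamily

variable {Φ A : Set V} {s : V → V ≃ₗ[ℝ] V} {α : V}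

theorem eq_reflection (hs : IsReflectionFamily Φ s) (hα : α ∈ Φ) :
    s α = (ℝ ∙ α)ᗮ.reflection.toLinearEquiv := by
  ext x
  rw [hs α hα, LinearIsometryEquiv.coe_toLinearEquiv, Submodule.reflection_orthogonal_apply,
    Submodule.reflection_singleton_apply, real_inner_comm]
  simp only [RCLike.ofReal_real_eq_id, id, ← real_inner_self_eq_norm_sq, two_smul, ← add_smul]
  rw [neg_sub, mul_div_assoc, two_mul]

theorem apply_self (hs : IsReflectionFamily Φ s) (hα : α ∈ Φ) : s α α = -α := by
  rw [hs.eq_reflection hα]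
  exact Submodule.reflection_orthogonalComplement_singleton_eq_neg α

theorem apply_apply (hs : IsReflectionFamily Φ s) (hα : α ∈ Φ) (x : V) : s α (s α x) = x := by
  rw [hs.eq_reflection hα]
  exact Submodule.reflection_reflection _ x

theorem mul_self (hs : IsReflectionFamily Φ s) (hα : α ∈ Φ) : s α * s α = 1 :=
  LinearEquiv.ext (hs.apply_apply hα)

theorem inv_eq (hs : IsReflectionFamily Φ s) (hα : α ∈ Φ) : (s α)⁻¹ = s α :=
  inv_eq_of_mul_eq_one_left (hs.mul_self hα)

theorem inner_map_map (hs : IsReflectionFamily Φ s) (hα : α ∈ Φ) (x y : V) :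
    inner ℝ (s α x) (s α y) = inner ℝ x y := by
  rw [hs.eq_reflection hα]
  exact LinearIsometryEquiv.inner_map_map _ x y

theorem apply_sub_mem_span (hs : IsReflectionFamily Φ s) (hα : α ∈ Φ) (x : V) :
    s α x - x ∈ ℝ ∙ α := by
  rw [hs α hα, sub_sub_cancel_left]
  exact Submodule.neg_mem _ (Submodule.smul_mem _ _ (Submodule.mem_span_singleton_self α))

theorem apply_mem (hs : IsReflectionFamily Φ s) (hΦ : IsRootSystem Φ) (hα : α ∈ Φ) {x : V}
    (hx : x ∈ Φ) : s α x ∈ Φ := by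
  rw [hs α hα]
  exact hΦ.reflect_mem α hα x hx

theorem apply_mem_rootsIn (hs : IsReflectionFamily Φ s) (hΦ : IsRootSystem Φ) (hA : A ⊆ Φ)
    (hα : α ∈ A) {x : V} (hx : x ∈ rootsIn Φ A) : s α x ∈ rootsIn Φ A := by
  refine ⟨hs.apply_mem hΦ (hA hα) hx.1, ?_⟩
  have hsub : s α x - x ∈ Submodule.span ℝ A :=
    Submodule.span_mono (Set.singleton_subset_iff.mpr hα) (hs.apply_sub_mem_span (hA hα) x)
  simpa using Submodule.add_mem _ hsub hx.2

theorem apply_map_eq_conj (hs : IsReflectionFamily Φ s) {w : V ≃ₗ[ℝ] V}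
    (hw : ∀ x y, inner ℝ (w x) (w y) = inner ℝ x y) {γ : V} (hγ : γ ∈ Φ) (hwγ : w γ ∈ Φ) :
    s (w γ) = w * s γ * w⁻¹ := by
  ext x
  have hx : inner ℝ (w⁻¹ x) γ = inner ℝ x (w γ) := by
    simpa using (hw (w⁻¹ x) γ).symm
  simp only [LinearEquiv.mul_apply, hs _ hwγ, hs γ hγ, map_sub, map_smul, hw, hx]
  simp

end IsReflectionFamily

section WeylGroup

open scoped Pointwise

variable {Φ A : Set V} {s : V → V ≃ₗ[ℝ] V}

theorem reflection_mem_weylGroupOf {α : V} (hα : α ∈ A) : s α ∈ weylGroupOf A s :=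
  Subgroup.subset_closure ⟨α, hα, rfl⟩

theorem weylGroupOf_le_stabilizer (hs : IsReflectionFamily Φ s) (hA : A ⊆ Φ) {S : Set V}
    (hS : ∀ α ∈ A, ∀ x ∈ S, s α x ∈ S) :
    weylGroupOf A s ≤ MulAction.stabilizer (V ≃ₗ[ℝ] V) S := by
  refine (Subgroup.closure_le _).mpr ?_
  rintro _ ⟨α, hα, rfl⟩
  refine MulAction.mem_stabilizer_set.mpr fun x => ⟨fun hx => ?_, hS α hα x⟩
  simpa only [LinearEquiv.smul_def, hs.apply_apply (hA hα)] using hS α hα _ hx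

theorem apply_mem_iff_of_mem_weylGroupOf (hs : IsReflectionFamily Φ s) (hA : A ⊆ Φ)
    {S : Set V} (hS : ∀ α ∈ A, ∀ x ∈ S, s α x ∈ S) {u : V ≃ₗ[ℝ] V}
    (hu : u ∈ weylGroupOf A s) (x : V) : u x ∈ S ↔ x ∈ S :=
  MulAction.mem_stabilizer_set.mp (weylGroupOf_le_stabilizer hs hA hS hu) x

theorem IsReflectionFamily.apply_mem_roots_iff (hs : IsReflectionFamily Φ s)
    (hΦ : IsRootSystem Φ) (hA : A ⊆ Φ) {u : V ≃ₗ[ℝ] V} (hu : u ∈ weylGroupOf A s) (x : V) :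
    u x ∈ Φ ↔ x ∈ Φ :=
  apply_mem_iff_of_mem_weylGroupOf hs hA (fun _ hα _ => hs.apply_mem hΦ (hA hα)) hu x

theorem IsReflectionFamily.apply_mem_rootsIn_iff (hs : IsReflectionFamily Φ s)
    (hΦ : IsRootSystem Φ) (hA : A ⊆ Φ) {u : V ≃ₗ[ℝ] V} (hu : u ∈ weylGroupOf A s) (x : V) :
    u x ∈ rootsIn Φ A ↔ x ∈ rootsIn Φ A :=
  apply_mem_iff_of_mem_weylGroupOf hs hA (fun _ hα _ => hs.apply_mem_rootsIn hΦ hA hα) hu x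

theorem inner_map_map_of_mem_weylGroupOf (hs : IsReflectionFamily Φ s) (hA : A ⊆ Φ)
    {u : V ≃ₗ[ℝ] V} (hu : u ∈ weylGroupOf A s) (x y : V) :
    inner ℝ (u x) (u y) = inner ℝ x y := by
  induction hu using Subgroup.closure_induction generalizing x y with
  | mem _ h =>
    obtain ⟨α, hα, rfl⟩ := h
    exact hs.inner_map_map (hA hα) x y
  | one => rfl
  | mul u v _ _ hu hv => exact (hu _ _).trans (hv x y)
  | inv u _ hu => simpa using (hu (u⁻¹ x) (u⁻¹ y)).symm

theorem exists_list_of_mem_weylGroupOf (hs : IsReflectionFamily Φ s) (hA : A ⊆ Φ)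
    {u : V ≃ₗ[ℝ] V} (hu : u ∈ weylGroupOf A s) :
    ∃ l : List V, (∀ δ ∈ l, δ ∈ A) ∧ u = (l.map s).prod := by
  induction hu using Subgroup.closure_induction with
  | mem _ h =>
    obtain ⟨α, hα, rfl⟩ := h
    exact ⟨[α], by simpa using hα, by simp⟩
  | one => exact ⟨[], by simp, rfl⟩
  | mul u v _ _ hu hv =>
    obtain ⟨l, hl, rfl⟩ := hu
    obtain ⟨m, hm, rfl⟩ := hv
    exact ⟨l ++ m, fun δ hδ => (List.mem_append.mp hδ).elim (hl δ) (hm δ), by simp⟩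
  | inv u _ hu =>
    obtain ⟨l, hl, rfl⟩ := hu
    refine ⟨l.reverse, by simpa using hl, ?_⟩
    rw [List.prod_inv_reverse, List.map_map, List.map_reverse]
    congr 2
    exact List.map_congr_left fun δ hδ => hs.inv_eq (hA (hl δ hδ))

end WeylGroup

namespace IsNonnegComb

variable {Δ A B : Set V} {α β : V}

theorem zero : IsNonnegComb Δ (0 : V) := ⟨0, by simp, fun _ => le_rfl, by simp⟩

theorem of_mem {δ : V} (hδ : δ ∈ Δ) : IsNonnegComb Δ δ := by
  classical
  refine ⟨Finsupp.single δ 1, by simpa using hδ, fun v => ?_, by simp⟩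
  rw [Finsupp.single_apply]
  split_ifs <;> norm_num

theorem add (hα : IsNonnegComb Δ α) (hβ : IsNonnegComb Δ β) : IsNonnegComb Δ (α + β) := by
  classical
  obtain ⟨c, hc, hc0, rfl⟩ := hα
  obtain ⟨d, hd, hd0, rfl⟩ := hβ
  refine ⟨c + d, ?_, fun v => add_nonneg (hc0 v) (hd0 v),
    by simp [Finsupp.sum_add_index', add_smul]⟩
  exact (Finset.coe_subset.mpr Finsupp.support_add).trans (by simpa using ⟨hc, hd⟩)

theorem smul {r : ℝ} (hr : 0 ≤ r) (hα : IsNonnegComb Δ α) : IsNonnegComb Δ (r • α) := by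
  obtain ⟨c, hc, hc0, rfl⟩ := hα
  refine ⟨r • c, (Finset.coe_subset.mpr Finsupp.support_smul).trans hc,
    fun v => mul_nonneg hr (hc0 v), ?_⟩
  simp [Finsupp.smul_sum, Finsupp.sum_smul_index, smul_smul]

theorem mem_span (hα : IsNonnegComb A α) : α ∈ Submodule.span ℝ A := by
  obtain ⟨c, hc, -, rfl⟩ := hα
  exact Submodule.mem_span_set.mpr ⟨c, hc, rfl⟩

theorem map (f : V →ₗ[ℝ] V) (hf : ∀ v ∈ A, IsNonnegComb Δ (f v)) (hα : IsNonnegComb A α) :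
    IsNonnegComb Δ (f α) := by
  obtain ⟨c, hc, hc0, rfl⟩ := hα
  rw [map_finsuppSum]
  exact Finset.sum_induction _ _ (fun _ _ => add) zero fun v hv => by
    simpa only [map_smul] using (hf v (hc hv)).smul (hc0 v)

/-- Coefficients with respect to a linearly independent `Δ` are unique, so the nonnegative
coefficients of `α` and `β` vanish wherever those of `α + β ∈ span B` do. -/
theorem of_add_mem_span (hΔ : LinearIndepOn ℝ id Δ) (hB : B ⊆ Δ) (hα : IsNonnegComb Δ α)
    (hβ : IsNonnegComb Δ β) (h : α + β ∈ Submodule.span ℝ B) : IsNonnegComb B α := by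
  classical
  obtain ⟨c, hc, hc0, rfl⟩ := hα
  obtain ⟨d, hd, hd0, rfl⟩ := hβ
  obtain ⟨e, he, hsum⟩ := Submodule.mem_span_set.mp h
  have hcd : c + d = e := by
    refine linearIndepOn_iffₛ.mp hΔ _ ?_ _ (he.trans hB) ?_
    · exact (Finset.coe_subset.mpr Finsupp.support_add).trans (by simpa using ⟨hc, hd⟩)
    · simp [Finsupp.linearCombination_apply, hsum, Finsupp.sum_add_index', add_smul]
  refine ⟨c, fun v hv => ?_, hc0, rfl⟩
  by_contra hvB
  have hev : c v + d v = 0 := by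
    rw [← Finsupp.add_apply, hcd, ← Finsupp.notMem_support_iff]
    exact fun hve => hvB (he hve)
  exact Finsupp.mem_support_iff.mp hv (by linarith [hc0 v, hd0 v])

end IsNonnegComb

namespace IsBase

variable {Φ Δ A : Set V} {s : V → V ≃ₗ[ℝ] V} {α δ : V}

theorem mem_posRoots (hΔ : IsBase Φ Δ) (hδ : δ ∈ Δ) : δ ∈ posRoots Φ Δ :=
  ⟨hΔ.subset hδ, .of_mem hδ⟩

theorem mem_posRoots_or_neg_mem (hΦ : IsRootSystem Φ) (hΔ : IsBase Φ Δ) (hα : α ∈ Φ) :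
    α ∈ posRoots Φ Δ ∨ -α ∈ posRoots Φ Δ :=
  (hΔ.pos_or_neg α hα).imp (⟨hα, ·⟩) (⟨hΦ.neg_mem hα, ·⟩)

theorem nonnegComb_of_mem_span (hΔ : IsBase Φ Δ) (hA : A ⊆ Δ) (hα : α ∈ posRoots Φ Δ)
    (hαA : α ∈ Submodule.span ℝ A) : IsNonnegComb A α :=
  hα.2.of_add_mem_span hΔ.indep hA .zero (by simpa using hαA)

theorem neg_notMem_posRoots (hΦ : IsRootSystem Φ) (hΔ : IsBase Φ Δ) (hα : α ∈ posRoots Φ Δ) :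
    -α ∉ posRoots Φ Δ := by
  intro hneg
  have h0 : α ∈ Submodule.span ℝ (∅ : Set V) :=
    (hα.2.of_add_mem_span hΔ.indep (Set.empty_subset Δ) hneg.2 (by simp)).mem_span
  rw [Submodule.span_empty, Submodule.mem_bot] at h0
  exact hΦ.zero_not_mem (h0 ▸ hα.1)

theorem reflection_apply_mem_posRoots (hΦ : IsRootSystem Φ) (hΔ : IsBase Φ Δ)
    (hs : IsReflectionFamily Φ s) (hδ : δ ∈ Δ) (hα : α ∈ posRoots Φ Δ) (hne : α ≠ δ) :
    s δ α ∈ posRoots Φ Δ := by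
  have hδΦ := hΔ.subset hδ
  refine (hΔ.mem_posRoots_or_neg_mem hΦ (hs.apply_mem hΦ hδΦ hα.1)).resolve_right fun hneg => ?_
  have hαδ : α ∈ ℝ ∙ δ := by
    refine (hα.2.of_add_mem_span hΔ.indep (Set.singleton_subset_iff.mpr hδ) hneg.2 ?_).mem_span
    simpa [← sub_eq_add_neg] using Submodule.neg_mem _ (hs.apply_sub_mem_span hδΦ α)
  obtain ⟨c, rfl⟩ := Submodule.mem_span_singleton.mp hαδ
  rcases hΦ.reduced δ hδΦ c hα.1 with rfl | rfl
  · exact hne (one_smul ℝ δ)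
  · exact hΔ.neg_notMem_posRoots hΦ (hΔ.mem_posRoots hδ) (by simpa using hα)

theorem reflection_apply_ne (hΦ : IsRootSystem Φ) (hΔ : IsBase Φ Δ)
    (hs : IsReflectionFamily Φ s) (hδ : δ ∈ Δ) (hα : α ∈ posRoots Φ Δ) : s δ α ≠ δ := by
  intro h
  have : α = -δ := by rw [← hs.apply_apply (hΔ.subset hδ) α, h, hs.apply_self (hΔ.subset hδ)]
  exact hΔ.neg_notMem_posRoots hΦ (hΔ.mem_posRoots hδ) (this ▸ hα)

theorem reflection_apply_mem_posRootsIn (hΦ : IsRootSystem Φ) (hΔ : IsBase Φ Δ)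
    (hs : IsReflectionFamily Φ s) (hA : A ⊆ Δ) (hδ : δ ∈ A) (hα : α ∈ posRootsIn Φ Δ A)
    (hne : α ≠ δ) : s δ α ∈ posRootsIn Φ Δ A :=
  ⟨hs.apply_mem_rootsIn hΦ (hA.trans hΔ.subset) hδ hα.1,
    hΔ.reflection_apply_mem_posRoots hΦ hs (hA hδ) hα.2 hne⟩

theorem reflection_apply_mem_posRoots_sdiff (hΦ : IsRootSystem Φ) (hΔ : IsBase Φ Δ)
    (hs : IsReflectionFamily Φ s) (hA : A ⊆ Δ) (hδ : δ ∈ A)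
    (hα : α ∈ posRoots Φ Δ \ rootsIn Φ A) : s δ α ∈ posRoots Φ Δ \ rootsIn Φ A := by
  have hAΦ : A ⊆ Φ := hA.trans hΔ.subset
  have hne : α ≠ δ := by
    rintro rfl
    exact hα.2 ⟨hAΦ hδ, Submodule.subset_span hδ⟩
  refine ⟨hΔ.reflection_apply_mem_posRoots hΦ hs (hA hδ) hα.1 hne, fun h => hα.2 ?_⟩
  simpa only [hs.apply_apply (hAΦ hδ)] using hs.apply_mem_rootsIn hΦ hAΦ hδ h

theorem apply_mem_posRoots_sdiff_iff (hΦ : IsRootSystem Φ) (hΔ : IsBase Φ Δ)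
    (hs : IsReflectionFamily Φ s) (hA : A ⊆ Δ) {u : V ≃ₗ[ℝ] V} (hu : u ∈ weylGroupOf A s)
    (x : V) : u x ∈ posRoots Φ Δ \ rootsIn Φ A ↔ x ∈ posRoots Φ Δ \ rootsIn Φ A :=
  apply_mem_iff_of_mem_weylGroupOf hs (hA.trans hΔ.subset)
    (fun _ hδ _ => hΔ.reflection_apply_mem_posRoots_sdiff hΦ hs hA hδ) hu x

theorem apply_mem_posRoots_of_forall_simple (hΔ : IsBase Φ Δ) (hA : A ⊆ Δ) {f : V ≃ₗ[ℝ] V}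
    (hf : ∀ δ ∈ A, f δ ∈ posRoots Φ Δ) (hα : α ∈ posRootsIn Φ Δ A) (hfα : f α ∈ Φ) :
    f α ∈ posRoots Φ Δ :=
  ⟨hfα, (hΔ.nonnegComb_of_mem_span hA hα.2 hα.1.2).map f.toLinearMap fun δ hδ => (hf δ hδ).2⟩

end IsBase

section Exchange

variable {Φ Δ A : Set V} {s : V → V ≃ₗ[ℝ] V}

/-- The exchange condition. -/
theorem exists_sublist_prod_mul_reflection_eq (hΦ : IsRootSystem Φ) (hΔ : IsBase Φ Δ)
    (hs : IsReflectionFamily Φ s) {γ : V} (hγ : γ ∈ posRoots Φ Δ) :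
    ∀ l : List V, (∀ δ ∈ l, δ ∈ Δ) → (l.map s).prod γ ∉ posRoots Φ Δ →
      ∃ m : List V, m.Sublist l ∧ m.length < l.length ∧ (l.map s).prod * s γ = (m.map s).prod
  | [], _, hneg => absurd (by simpa using hγ) hneg
  | δ :: l, hl, hneg => by
    have hlΔ : ∀ x ∈ l, x ∈ Δ := fun x hx => hl x (List.mem_cons_of_mem δ hx)
    by_cases hpos : (l.map s).prod γ ∈ posRoots Φ Δ
    · have hδ : (l.map s).prod γ = δ := by
        by_contra hne
        exact hneg (by simpa using
          hΔ.reflection_apply_mem_posRoots hΦ hs (hl δ List.mem_cons_self) hpos hne)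
      have hw : (l.map s).prod ∈ weylGroupOf Δ s := Subgroup.list_prod_mem _ (by
        simpa using fun x hx => reflection_mem_weylGroupOf (hlΔ x hx))
      have hconj := hs.apply_map_eq_conj (inner_map_map_of_mem_weylGroupOf hs hΔ.subset hw)
        hγ.1 (hδ ▸ hΔ.subset (hl δ List.mem_cons_self))
      refine ⟨l, List.sublist_cons_self δ l, by simp, ?_⟩
      rw [List.map_cons, List.prod_cons, ← hδ, hconj]
      simp [mul_assoc, hs.mul_self hγ.1]
    · obtain ⟨m, hm, hlen, heq⟩ :=
        exists_sublist_prod_mul_reflection_eq hΦ hΔ hs hγ l hlΔ hpos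
      exact ⟨δ :: m, hm.cons_cons δ, by simpa using hlen, by simp [mul_assoc, heq]⟩

theorem eq_one_of_forall_apply_mem_posRoots (hΦ : IsRootSystem Φ) (hΔ : IsBase Φ Δ)
    (hs : IsReflectionFamily Φ s) (hA : A ⊆ Δ) {u : V ≃ₗ[ℝ] V} (hu : u ∈ weylGroupOf A s)
    (hpos : ∀ δ ∈ A, u δ ∈ posRoots Φ Δ) : u = 1 := by
  obtain ⟨l, hl, rfl⟩ := exists_list_of_mem_weylGroupOf hs (hA.trans hΔ.subset) hu
  clear hu
  induction hn : l.length using Nat.strong_induction_on generalizing l with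
  | _ n ih =>
    rcases l.eq_nil_or_concat' with rfl | ⟨l, δ, rfl⟩
    · rfl
    have hδ : δ ∈ A := hl δ (by simp)
    have hlA : ∀ x ∈ l, x ∈ A := fun x hx => hl x (by simp [hx])
    have hprod : ((l ++ [δ]).map s).prod = (l.map s).prod * s δ := by simp
    -- `u δ = -(l.map s).prod δ` is positive, so the exchange condition shortens the word.
    have hneg : (l.map s).prod δ ∉ posRoots Φ Δ := by
      have := hpos δ hδ
      rw [hprod, LinearEquiv.mul_apply, hs.apply_self (hΔ.subset (hA hδ)), map_neg] at this
      exact fun h => hΔ.neg_notMem_posRoots hΦ h this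
    obtain ⟨m, hm, hlen, heq⟩ := exists_sublist_prod_mul_reflection_eq hΦ hΔ hs
      (hΔ.mem_posRoots (hA hδ)) l (fun x hx => hA (hlA x hx)) hneg
    rw [hprod, heq] at hpos ⊢
    have hlt : m.length < n := by rw [← hn, List.length_append, List.length_singleton]; omega
    exact ih m.length hlt m (fun x hx => hlA x (hm.subset hx)) hpos rfl

end Exchange

section Inversions

variable {Φ Δ A : Set V} {s : V → V ≃ₗ[ℝ] V}

def inversionSet (Φ Δ A : Set V) (y : V ≃ₗ[ℝ] V) : Set V :=
  {α ∈ posRootsIn Φ Δ A | y α ∉ posRoots Φ Δ}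

theorem mapsTo_inversionSet_mul_reflection (hΦ : IsRootSystem Φ) (hΔ : IsBase Φ Δ)
    (hs : IsReflectionFamily Φ s) (hA : A ⊆ Δ) {δ : V} (hδ : δ ∈ A) {y : V ≃ₗ[ℝ] V}
    (hyδ : y δ ∈ Φ) (hyδ' : y δ ∉ posRoots Φ Δ) :
    Set.MapsTo (s δ) (inversionSet Φ Δ A (y * s δ)) (inversionSet Φ Δ A y \ {δ}) := by
  rintro α ⟨hα, hyα⟩
  have hne : α ≠ δ := by
    rintro rfl
    refine hyα ?_
    rw [LinearEquiv.mul_apply, hs.apply_self (hΔ.subset (hA hδ)), map_neg]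
    exact (hΔ.mem_posRoots_or_neg_mem hΦ hyδ).resolve_left hyδ'
  exact ⟨⟨hΔ.reflection_apply_mem_posRootsIn hΦ hs hA hδ hα hne, hyα⟩,
    hΔ.reflection_apply_ne hΦ hs (hA hδ) hα.2⟩

/-- Take `x` with the fewest inversions of `y * x`: a simple root `δ` made negative would give
`x * s δ` with fewer. -/
theorem exists_mem_weylGroupOf_forall_apply_mem_posRoots (hΦ : IsRootSystem Φ)
    (hΔ : IsBase Φ Δ) (hs : IsReflectionFamily Φ s) (hA : A ⊆ Δ) {y : V ≃ₗ[ℝ] V}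
    (hy : ∀ α ∈ Φ, y α ∈ Φ) :
    ∃ x ∈ weylGroupOf A s, ∀ δ ∈ A, y (x δ) ∈ posRoots Φ Δ := by
  obtain ⟨x, hx, hmin⟩ := (measure fun x => (inversionSet Φ Δ A (y * x)).ncard).wf.has_min
    (weylGroupOf A s : Set (V ≃ₗ[ℝ] V)) ⟨1, Subgroup.one_mem _⟩
  refine ⟨x, hx, fun δ hδ => by_contra fun hneg => hmin _
    (Subgroup.mul_mem _ hx (reflection_mem_weylGroupOf hδ)) ?_⟩
  have hAΦ : A ⊆ Φ := hA.trans hΔ.subset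
  have hxδ : y (x δ) ∈ Φ := hy _ ((hs.apply_mem_roots_iff hΦ hAΦ hx δ).mpr (hAΦ hδ))
  have hδ_inv : δ ∈ inversionSet Φ Δ A (y * x) :=
    ⟨⟨⟨hAΦ hδ, Submodule.subset_span hδ⟩, hΔ.mem_posRoots (hA hδ)⟩, hneg⟩
  have hfin : (inversionSet Φ Δ A (y * x)).Finite :=
    hΦ.finite.subset fun α hα => hα.1.1.1
  show (inversionSet Φ Δ A (y * (x * s δ))).ncard < (inversionSet Φ Δ A (y * x)).ncard
  calc (inversionSet Φ Δ A (y * (x * s δ))).ncard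
      ≤ (inversionSet Φ Δ A (y * x) \ {δ}).ncard := by
        rw [← mul_assoc]
        exact Set.ncard_le_ncard_of_injOn _
          (mapsTo_inversionSet_mul_reflection hΦ hΔ hs hA hδ hxδ hneg)
          (s δ).injective.injOn hfin.sdiff
    _ < (inversionSet Φ Δ A (y * x)).ncard := Set.ncard_sdiff_singleton_lt_of_mem hδ_inv hfin

end Inversions

section DoubleCosets

variable {Φ Δ I L : Set V} {s : V → V ≃ₗ[ℝ] V}

theorem image_rootsIn_inter_eq_empty_of_image_posRootsIn_subset (hΦ : IsRootSystem Φ)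
    (hΔ : IsBase Φ Δ) {f : V ≃ₗ[ℝ] V}
    (hf : ⇑f '' posRootsIn Φ Δ L ⊆ posRoots Φ Δ \ rootsIn Φ I) :
    ⇑f '' rootsIn Φ L ∩ rootsIn Φ I = ∅ := by
  refine Set.eq_empty_iff_forall_notMem.mpr ?_
  rintro _ ⟨⟨α, hα, rfl⟩, hαI⟩
  rcases hΔ.mem_posRoots_or_neg_mem hΦ hα.1 with hpos | hneg
  · exact (hf ⟨α, ⟨hα, hpos⟩, rfl⟩).2 hαI
  · refine (hf ⟨-α, ⟨neg_mem_rootsIn hΦ hα, hneg⟩, rfl⟩).2 ?_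
    simpa using neg_mem_rootsIn hΦ hαI

theorem image_rootsIn_inter_eq_empty_mul (hΦ : IsRootSystem Φ) (hs : IsReflectionFamily Φ s)
    (hI : I ⊆ Φ) (hL : L ⊆ Φ) {w u v : V ≃ₗ[ℝ] V} (hu : u ∈ weylGroupOf L s)
    (hv : v ∈ weylGroupOf I s) (h : ⇑w⁻¹ '' rootsIn Φ L ∩ rootsIn Φ I = ∅) :
    ⇑(u * w * v)⁻¹ '' rootsIn Φ L ∩ rootsIn Φ I = ∅ := by
  refine Set.eq_empty_iff_forall_notMem.mpr ?_
  rintro _ ⟨⟨α, hα, rfl⟩, hαI⟩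
  have huα : u⁻¹ α ∈ rootsIn Φ L :=
    (hs.apply_mem_rootsIn_iff hΦ hL (Subgroup.inv_mem _ hu) α).mpr hα
  have hvα : w⁻¹ (u⁻¹ α) ∈ rootsIn Φ I := by
    refine (hs.apply_mem_rootsIn_iff hΦ hI (Subgroup.inv_mem _ hv) _).mp ?_
    simpa [mul_assoc] using hαI
  exact Set.eq_empty_iff_forall_notMem.mp h _ ⟨⟨_, huα, rfl⟩, hvα⟩

theorem exists_image_posRootsIn_subset (hΦ : IsRootSystem Φ) (hΔ : IsBase Φ Δ)
    (hs : IsReflectionFamily Φ s) (hI : I ⊆ Φ) (hL : L ⊆ Δ) {w : V ≃ₗ[ℝ] V}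
    (hw : w ∈ weylGroupOf Φ s) (h : ⇑w⁻¹ '' rootsIn Φ L ∩ rootsIn Φ I = ∅) :
    ∃ u ∈ weylGroupOf L s, ∃ v ∈ weylGroupOf I s,
      ⇑(u * w * v)⁻¹ '' posRootsIn Φ Δ L ⊆ posRoots Φ Δ \ rootsIn Φ I := by
  have hΦw : ∀ α ∈ Φ, w⁻¹ α ∈ Φ := fun α =>
    (hs.apply_mem_roots_iff hΦ subset_rfl (Subgroup.inv_mem _ hw) α).mpr
  obtain ⟨x, hx, hpos⟩ := exists_mem_weylGroupOf_forall_apply_mem_posRoots hΦ hΔ hs hL hΦw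
  have hD := image_rootsIn_inter_eq_empty_mul hΦ hs hI (hL.trans hΔ.subset)
    (Subgroup.inv_mem _ hx) (Subgroup.one_mem _) h
  have hxw : (x⁻¹ * w * 1)⁻¹ = w⁻¹ * x := by group
  refine ⟨x⁻¹, Subgroup.inv_mem _ hx, 1, Subgroup.one_mem _, ?_⟩
  rintro _ ⟨α, hα, rfl⟩
  refine ⟨hΔ.apply_mem_posRoots_of_forall_simple hL (f := (x⁻¹ * w * 1)⁻¹) ?_ hα ?_,
    fun hαI => Set.eq_empty_iff_forall_notMem.mp hD _ ⟨⟨α, hα.1, rfl⟩, hαI⟩⟩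
  · simpa only [hxw, LinearEquiv.mul_apply] using hpos
  · rw [hxw, LinearEquiv.mul_apply]
    exact hΦw _ ((hs.apply_mem_roots_iff hΦ (hL.trans hΔ.subset) hx α).mpr hα.1.1)

theorem eq_one_of_image_posRootsIn_subset (hΦ : IsRootSystem Φ) (hΔ : IsBase Φ Δ)
    (hs : IsReflectionFamily Φ s) (hI : I ⊆ Δ) (hL : L ⊆ Δ) {w u v : V ≃ₗ[ℝ] V}
    (hu : u ∈ weylGroupOf L s) (hv : v ∈ weylGroupOf I s)
    (hw : ⇑w⁻¹ '' posRootsIn Φ Δ L ⊆ posRoots Φ Δ \ rootsIn Φ I)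
    (huwv : ⇑(u * w * v)⁻¹ '' posRootsIn Φ Δ L ⊆ posRoots Φ Δ \ rootsIn Φ I) : u = 1 := by
  refine inv_eq_one.mp (eq_one_of_forall_apply_mem_posRoots hΦ hΔ hs hL (Subgroup.inv_mem _ hu)
    fun δ hδ => by_contra fun hneg => ?_)
  have hLΦ : L ⊆ Φ := hL.trans hΔ.subset
  have hδL : δ ∈ posRootsIn Φ Δ L :=
    ⟨⟨hLΦ hδ, Submodule.subset_span hδ⟩, hΔ.mem_posRoots (hL hδ)⟩
  have huδ : u⁻¹ δ ∈ rootsIn Φ L :=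
    (hs.apply_mem_rootsIn_iff hΦ hLΦ (Subgroup.inv_mem _ hu) δ).mpr hδL.1
  have hneg' : -(u⁻¹ δ) ∈ posRootsIn Φ Δ L :=
    ⟨neg_mem_rootsIn hΦ huδ, (hΔ.mem_posRoots_or_neg_mem hΦ huδ.1).resolve_left hneg⟩
  have hvw : v⁻¹ (w⁻¹ (-(u⁻¹ δ))) ∈ posRoots Φ Δ \ rootsIn Φ I :=
    (hΔ.apply_mem_posRoots_sdiff_iff hΦ hs hI (Subgroup.inv_mem _ hv) _).mpr
      (hw ⟨_, hneg', rfl⟩)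
  refine hΔ.neg_notMem_posRoots hΦ (huwv ⟨δ, hδL, rfl⟩).1 ?_
  simpa [mul_assoc] using hvw.1

end DoubleCosets

/-- For `I, L ⊆ Π`: every double coset `W_L w W_I` with
`w⁻¹(Φ_L) ∩ Φ_I = ∅` contains exactly one left coset `w'W_I` with
`w'⁻¹(Φ_L⁺) ⊆ Φ⁺ \ Φ_I`; consequently the projection `W/W_I → W_L\W/W_I` restricts to a
bijection from `{wW_I ∣ w⁻¹(Φ_L⁺) ⊆ Φ⁺ \ Φ_I}` onto
`{W_L w W_I ∣ w⁻¹(Φ_L) ∩ Φ_I = ∅}` (the latter condition being independent of the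
representative).  This is expressed below at the level of elements: the condition
`w⁻¹(Φ_L⁺) ⊆ Φ⁺ \ Φ_I` implies `w⁻¹(Φ_L) ∩ Φ_I = ∅` (well-definedness into the target);
the condition `w⁻¹(Φ_L) ∩ Φ_I = ∅` only depends on the double coset of `w`;
every double coset with `w⁻¹(Φ_L) ∩ Φ_I = ∅` contains an element satisfying
`w'⁻¹(Φ_L⁺) ⊆ Φ⁺ \ Φ_I` (surjectivity/existence); and two elements of a common double coset
both satisfying `·⁻¹(Φ_L⁺) ⊆ Φ⁺ \ Φ_I` lie in a common left `W_I`-coset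
(uniqueness/injectivity). -/
theorem statement5 (Φ Δ : Set V) (hΦ : IsRootSystem Φ) (hΔ : IsBase Φ Δ)
    (s : V → V ≃ₗ[ℝ] V) (hs : IsReflectionFamily Φ s)
    (I L : Set V) (hI : I ⊆ Δ) (hL : L ⊆ Δ) :
    (∀ w ∈ weylGroupOf Φ s,
      ⇑w⁻¹ '' posRootsIn Φ Δ L ⊆ posRoots Φ Δ \ rootsIn Φ I →
        ⇑w⁻¹ '' rootsIn Φ L ∩ rootsIn Φ I = ∅) ∧
    (∀ w ∈ weylGroupOf Φ s, ∀ u ∈ weylGroupOf L s, ∀ v ∈ weylGroupOf I s,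
      (⇑w⁻¹ '' rootsIn Φ L ∩ rootsIn Φ I = ∅ ↔
        ⇑(u * w * v)⁻¹ '' rootsIn Φ L ∩ rootsIn Φ I = ∅)) ∧
    (∀ w ∈ weylGroupOf Φ s, ⇑w⁻¹ '' rootsIn Φ L ∩ rootsIn Φ I = ∅ →
      ∃ u ∈ weylGroupOf L s, ∃ v ∈ weylGroupOf I s,
        ⇑(u * w * v)⁻¹ '' posRootsIn Φ Δ L ⊆ posRoots Φ Δ \ rootsIn Φ I) ∧
    (∀ w₁ ∈ weylGroupOf Φ s, ∀ w₂ ∈ weylGroupOf Φ s,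
      ⇑w₁⁻¹ '' posRootsIn Φ Δ L ⊆ posRoots Φ Δ \ rootsIn Φ I →
      ⇑w₂⁻¹ '' posRootsIn Φ Δ L ⊆ posRoots Φ Δ \ rootsIn Φ I →
      (∃ u ∈ weylGroupOf L s, ∃ v ∈ weylGroupOf I s, w₂ = u * w₁ * v) →
      w₁⁻¹ * w₂ ∈ weylGroupOf I s) := by
  have hIΦ : I ⊆ Φ := hI.trans hΔ.subset
  have hLΦ : L ⊆ Φ := hL.trans hΔ.subset
  refine ⟨fun w _ => image_rootsIn_inter_eq_empty_of_image_posRootsIn_subset hΦ hΔ,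
    fun w _ u hu v hv => ⟨image_rootsIn_inter_eq_empty_mul hΦ hs hIΦ hLΦ hu hv, fun h => ?_⟩,
    fun w hw => exists_image_posRootsIn_subset hΦ hΔ hs hIΦ hL hw, ?_⟩
  · simpa [mul_assoc] using image_rootsIn_inter_eq_empty_mul hΦ hs hIΦ hLΦ
      (Subgroup.inv_mem _ hu) (Subgroup.inv_mem _ hv) h
  · rintro w₁ - _ - h₁ h₂ ⟨u, hu, v, hv, rfl⟩
    obtain rfl := eq_one_of_image_posRootsIn_subset hΦ hΔ hs hI hL hu hv h₁ h₂
    simpa [mul_assoc] using hv
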